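/- Suppose f' : {0,1}^{2n-1} → {0,1} is monotone with Φ_{f'}(1) ≥ λ ≥ 1/n, and g is the minor of f' with respect to a uniformly random pairing map π₂ : [2n-1] → [n] (π₂(1)=1, remaining coordinates paired uniformly at random). Then there exists γ = γ(λ) > 0 such that E_{π₂}[Φ_g(1)] ≥ γ. -/

import Mathlib

open Finset

/-- A Boolean function on subsets of `Fin m` is monotone. -/
def MonotoneB {m : ℕ} (f : Finset (Fin m) → Bool) : Prop :=
  ∀ S T : Finset (Fin m), S ⊆ T → f S = true → f T = true

/-- The boundary of coordinate `i`: sets `S` not containing `i` with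
`f (S ∪ {i}) = 1` and `f S = 0`. -/
def boundary {m : ℕ} (f : Finset (Fin m) → Bool) (i : Fin m) : Finset (Finset (Fin m)) :=
  Finset.univ.filter (fun S => i ∉ S ∧ f (insert i S) = true ∧ f S = false)

/-- `mu f i j` : the fraction of size-`j` subsets of `[m] \ {i}` lying in the
boundary of coordinate `i`. -/
def mu {m : ℕ} (f : Finset (Fin m) → Bool) (i : Fin m) (j : ℕ) : ℚ :=
  (((boundary f i).filter (fun S => S.card = j)).card : ℚ) / (((m - 1).choose j : ℕ) : ℚ)

/-- The Shapley value of coordinate `i` of `f` : the probability over a uniformly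
random permutation `σ` that `i` is the pivotal coordinate on the increasing path
`∅ = P₀ ⊂ P₁ ⊂ ⋯ ⊂ Pₘ = univ` given by `σ`. -/
def shapley {m : ℕ} (f : Finset (Fin m) → Bool) (i : Fin m) : ℚ :=
  (((Finset.univ : Finset (Equiv.Perm (Fin m))).filter (fun σ =>
    ∃ j : Fin m, σ j = i ∧
      f ((Finset.univ.filter (fun k => k < j)).image (fun k => σ k)) = false ∧
      f ((Finset.univ.filter (fun k => k ≤ j)).image (fun k => σ k)) = true)).card : ℚ)
    / ((Nat.factorial m : ℕ) : ℚ)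

/-- `g` is the minor of `f` with respect to `π`. -/
def minorOf {m k : ℕ} (g : Finset (Fin k) → Bool) (f : Finset (Fin m) → Bool)
    (π : Fin m → Fin k) : Prop :=
  ∀ S : Finset (Fin k), g S = f (Finset.univ.filter (fun i => π i ∈ S))

/-- The minor of `f` with respect to `π`, as a function. -/
def minorFun {m k : ℕ} (f : Finset (Fin m) → Bool) (π : Fin m → Fin k) :
    Finset (Fin k) → Bool :=
  fun S => f (Finset.univ.filter (fun i => π i ∈ S))

/-- The set of "pairing" maps `π₂ : [2n-1] → [n]` with `π₂(1) = 1` and the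
remaining `2n-2` elements partitioned into `n-1` pairs. -/
def pairingMaps (n : ℕ) (hn : 0 < n) : Finset (Fin (2*n-1) → Fin n) :=
  Finset.univ.filter (fun π => π ⟨0, by omega⟩ = ⟨0, hn⟩ ∧
    ∀ i : Fin n, i.val ≠ 0 → (Finset.univ.filter (fun j => π j = i)).card = 2)

/-!
By the permutation form of the Shapley value, `Φ_f(i) = (1/m) ∑_j μ_f(i, j)`. A pairing map pulls a
`k`-subset of `[n] ∖ {1}` back to a `2k`-subset of `[2n-1] ∖ {1}`; since the permutations fixing
coordinate `1` act transitively on the latter, averaging over random pairings gives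
`E[μ_g(1, k)] = μ_{f'}(1, 2k)`, hence `E[Φ_g(1)] = (1/n) ∑_k μ_{f'}(1, 2k)`.

For monotone `f'`, `μ(j) = q(j) - t(j)`, where `q(j), t(j) ∈ [0, 1]` are the proportions of the
`j`-sets `S` with `f'(S ∪ {1}) = 1`, resp. `f'(S) = 1`; both are nondecreasing in `j` by the local
LYM inequality. So `μ(2k+1) ≤ q(2k+2) - t(2k)`, and summing telescopes the odd terms against the
even ones: `∑_j μ(j) ≤ 2 ∑_k μ(2k) + 1`. As `∑_j μ(j) = (2n-1) Φ_{f'}(1) ≥ (2n-1)λ` and `nλ ≥ 1`, this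
gives `E[Φ_g(1)] ≥ λ/4` for `n ≥ 2`, while for `n = 1` the minor is `f'` itself.
-/

section Counting

variable {α β : Type*} [DecidableEq β]

theorem card_filter_mem_eq_mul (s : Finset α) (B : Finset β) (φ : α → β) (c : ℕ)
    (h : ∀ b ∈ B, #(s.filter (φ · = b)) = c) : #(s.filter (φ · ∈ B)) = #B * c := by
  rw [card_eq_sum_card_fiberwise (s := s.filter (φ · ∈ B)) (t := B) fun a ha => (mem_filter.1 ha).2,
    ← smul_eq_mul, ← sum_const]
  refine sum_congr rfl fun b hb => ?_
  rw [filter_filter, ← h b hb]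
  congr 1
  exact filter_congr fun a _ => ⟨And.right, fun h => ⟨h ▸ hb, h⟩⟩

theorem card_filter_mem_mul_card_eq_of_card_fiber_eq (s : Finset α) (t B : Finset β)
    (φ : α → β) (hφ : ∀ a ∈ s, φ a ∈ t) (hB : B ⊆ t)
    (hfib : ∀ b ∈ t, ∀ b' ∈ t, #(s.filter (φ · = b)) = #(s.filter (φ · = b'))) :
    #(s.filter (φ · ∈ B)) * #t = #s * #B := by
  rcases t.eq_empty_or_nonempty with rfl | ⟨b₀, hb₀⟩
  · simp [subset_empty.1 hB]
  have key : ∀ B ⊆ t, #(s.filter (φ · ∈ B)) = #B * #(s.filter (φ · = b₀)) :=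
    fun B hB => card_filter_mem_eq_mul s B φ _ fun b hb => hfib b (hB hb) b₀ hb₀
  have hs := key t Subset.rfl
  rw [filter_true_of_mem hφ] at hs
  rw [key B hB, hs]
  ring

end Counting

section LevelDensity

variable {α : Type*}

def levelDensity (U : Finset α) (p : Finset α → Prop) [DecidablePred p] (j : ℕ) : ℚ :=
  #((U.powersetCard j).filter p) / (#U).choose j

variable {U : Finset α} {p : Finset α → Prop} [DecidablePred p]

theorem card_filter_powersetCard_mul_le [DecidableEq α] (hp : Monotone p) (j : ℕ) :
    #((U.powersetCard j).filter p) * (#U - j)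
      ≤ #((U.powersetCard (j + 1)).filter p) * (j + 1) := by
  refine card_mul_le_card_mul (· ⊆ ·) (fun S hS => ?_) (fun T hT => ?_)
  · obtain ⟨hSU, hSj⟩ := mem_powersetCard.1 (mem_filter.1 hS).1
    rw [← hSj, ← card_sdiff_of_subset hSU,
      ← card_image_of_injOn ((insert_inj_on S).mono fun x hx => (mem_sdiff.1 hx).2)]
    refine card_le_card fun T hT => ?_
    obtain ⟨x, hx, rfl⟩ := mem_image.1 hT
    obtain ⟨hxU, hxS⟩ := mem_sdiff.1 hx
    simp only [mem_bipartiteAbove, mem_filter, mem_powersetCard, insert_subset_iff]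
    exact ⟨⟨⟨⟨hxU, hSU⟩, (by rw [card_insert_of_notMem hxS, hSj])⟩,
      hp (subset_insert x S) (mem_filter.1 hS).2⟩, subset_insert x S⟩
  · obtain ⟨-, hTj⟩ := mem_powersetCard.1 (mem_filter.1 hT).1
    calc #((U.powersetCard j).filter p |>.bipartiteBelow (· ⊆ ·) T)
        ≤ #(T.powersetCard j) := card_le_card fun S hS => by
          simp only [mem_bipartiteBelow, mem_filter, mem_powersetCard] at hS ⊢
          exact ⟨hS.2, hS.1.1.2⟩
      _ = j + 1 := by rw [card_powersetCard, hTj, Nat.choose_succ_self_right]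

theorem levelDensity_le_succ [DecidableEq α] (hp : Monotone p) {j : ℕ} (hj : j < #U) :
    levelDensity U p j ≤ levelDensity U p (j + 1) := by
  have key : #((U.powersetCard j).filter p) * (#U).choose (j + 1)
      ≤ #((U.powersetCard (j + 1)).filter p) * (#U).choose j := by
    refine Nat.le_of_mul_le_mul_right ?_ (by omega : 0 < j + 1)
    calc #((U.powersetCard j).filter p) * (#U).choose (j + 1) * (j + 1)
        = #((U.powersetCard j).filter p) * (#U - j) * (#U).choose j := by
          rw [mul_assoc, Nat.choose_succ_right_eq]; ring
      _ ≤ #((U.powersetCard (j + 1)).filter p) * (j + 1) * (#U).choose j :=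
          Nat.mul_le_mul_right _ (card_filter_powersetCard_mul_le hp j)
      _ = _ := by ring
  have hC : ∀ i ≤ #U, (0 : ℚ) < (#U).choose i := fun i hi => by exact_mod_cast Nat.choose_pos hi
  rw [levelDensity, levelDensity, div_le_div_iff₀ (hC j hj.le) (hC (j + 1) hj)]
  exact_mod_cast key

theorem levelDensity_nonneg (j : ℕ) : 0 ≤ levelDensity U p j := by
  unfold levelDensity; positivity

theorem levelDensity_le_one (j : ℕ) : levelDensity U p j ≤ 1 := by
  refine div_le_one_of_le₀ ?_ (Nat.cast_nonneg _)
  rw [← card_powersetCard]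
  exact_mod_cast card_filter_le _ _

end LevelDensity

theorem sum_range_sub_le_two_mul_sum_even {R : Type*} [CommRing R] [LinearOrder R]
    [IsStrictOrderedRing R] (q t : ℕ → R) (N : ℕ)
    (hq : ∀ j < 2 * N, q j ≤ q (j + 1)) (ht : ∀ j < 2 * N, t j ≤ t (j + 1)) :
    ∑ j ∈ range (2 * N + 1), (q j - t j)
      ≤ 2 * ∑ k ∈ range (N + 1), (q (2 * k) - t (2 * k)) - q 0 + t (2 * N) := by
  induction N with
  | zero => simp only [Nat.mul_zero, zero_add, sum_range_one]; linarith
  | succ N ih =>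
    have ih := ih (fun j hj => hq j (by omega)) (fun j hj => ht j (by omega))
    have hq' := hq (2 * N + 1) (by omega)
    have ht' := ht (2 * N) (by omega)
    rw [show 2 * (N + 1) + 1 = 2 * N + 1 + 1 + 1 by ring, sum_range_succ, sum_range_succ,
      sum_range_succ _ (N + 1), show 2 * (N + 1) = 2 * N + 1 + 1 by ring]
    linarith

theorem mem_powersetCard_univ_erase {α : Type*} [Fintype α] [DecidableEq α] {i : α}
    {j : ℕ} {S : Finset α} : S ∈ (univ.erase i).powersetCard j ↔ i ∉ S ∧ #S = j := by
  rw [mem_powersetCard, subset_erase]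
  simp

section BooleanFunction

variable {m : ℕ} {f : Finset (Fin m) → Bool}

theorem MonotoneB.monotone (hf : MonotoneB f) : Monotone fun S => f S = true :=
  fun S T h => hf S T h

theorem MonotoneB.monotone_insert (hf : MonotoneB f) (i : Fin m) :
    Monotone fun S => f (insert i S) = true :=
  fun _ _ h => hf _ _ (insert_subset_insert i h)

theorem mu_eq_levelDensity_sub (hf : MonotoneB f) (i : Fin m) (j : ℕ) :
    mu f i j = levelDensity (univ.erase i) (fun S => f (insert i S) = true) j
      - levelDensity (univ.erase i) (fun S => f S = true) j := by
  set L := (univ.erase i).powersetCard j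
  have hsub : L.filter (fun S => f S = true) ⊆ L.filter (fun S => f (insert i S) = true) :=
    monotone_filter_right L fun S _ h => hf S _ (subset_insert i S) h
  have hbd : (boundary f i).filter (fun S => #S = j)
      = L.filter (fun S => f (insert i S) = true) \ L.filter (fun S => f S = true) := by
    ext S
    simp only [boundary, L, mem_filter, mem_univ, true_and, mem_sdiff,
      mem_powersetCard_univ_erase]
    cases f S <;> simp only [Bool.true_eq_false, Bool.false_eq_true, and_false, and_true,
      not_false_eq_true, false_and] <;> tauto
  rw [mu, levelDensity, levelDensity, hbd, card_sdiff_of_subset hsub,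
    card_erase_of_mem (mem_univ i), card_univ, Fintype.card_fin,
    Nat.cast_sub (card_le_card hsub), sub_div]

theorem sum_mu_le_two_mul_sum_mu_even (hf : MonotoneB f) (i : Fin m) {n : ℕ}
    (hmn : m + 1 = 2 * n) :
    ∑ j ∈ range m, mu f i j ≤ 2 * ∑ k ∈ range n, mu f i (2 * k) + 1 := by
  obtain ⟨N, rfl⟩ : ∃ N, n = N + 1 := ⟨n - 1, by omega⟩
  obtain rfl : m = 2 * N + 1 := by omega
  have hU : #(univ.erase i) = 2 * N := by simp
  simp only [mu_eq_levelDensity_sub hf]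
  have key := sum_range_sub_le_two_mul_sum_even
    (levelDensity (univ.erase i) (fun S => f (insert i S) = true))
    (levelDensity (univ.erase i) (fun S => f S = true)) N
    (fun j hj => levelDensity_le_succ (hf.monotone_insert i) (by rw [hU]; omega))
    (fun j hj => levelDensity_le_succ hf.monotone (by rw [hU]; omega))
  have hq₀ := levelDensity_nonneg (U := univ.erase i) (p := fun S => f (insert i S) = true) 0
  have ht := levelDensity_le_one (U := univ.erase i) (p := fun S => f S = true) (2 * N)
  linarith

end BooleanFunction

theorem Equiv.Perm.exists_map_finset_eq_of_notMem {α : Type*} [DecidableEq α] {a : α}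
    {s t : Finset α} (hs : a ∉ s) (ht : a ∉ t) (hst : #s = #t) :
    ∃ ρ : Equiv.Perm α, ρ a = a ∧ s.map ρ.toEmbedding = t := by
  have hsub : ∀ u : Finset α, a ∉ u → (u.subtype (· ≠ a)).map (Function.Embedding.subtype _) = u :=
    fun u hu => subtype_map_of_mem fun x hx h => hu (h ▸ hx)
  have hcard : ∀ u : Finset α, a ∉ u → #(u.subtype (· ≠ a)) = #u := fun u hu => by
    rw [← card_map (Function.Embedding.subtype _), hsub u hu]
  obtain ⟨σ, hσ⟩ := Equiv.Perm.exists_map_finset_eq (s.subtype (· ≠ a)) (t.subtype (· ≠ a))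
    (by rw [hcard s hs, hcard t ht, hst])
  refine ⟨Equiv.Perm.ofSubtype σ, Equiv.Perm.ofSubtype_apply_of_not_mem σ (not_not.2 rfl), ?_⟩
  rw [← hsub s hs, ← hsub t ht, ← hσ, map_map, map_map]
  congr 1
  ext x
  exact Equiv.Perm.ofSubtype_apply_coe σ x

section Shapley

variable {m : ℕ}

def pivotSet (i : Fin m) (σ : Equiv.Perm (Fin m)) : Finset (Fin m) :=
  (univ.filter (· < σ.symm i)).image σ

theorem card_pivotSet (i : Fin m) (σ : Equiv.Perm (Fin m)) :
    #(pivotSet i σ) = σ.symm i := by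
  rw [pivotSet, card_image_of_injective _ σ.injective, filter_gt_eq_Iio, Fin.card_Iio]

theorem notMem_pivotSet (i : Fin m) (σ : Equiv.Perm (Fin m)) : i ∉ pivotSet i σ := by
  simp only [pivotSet, mem_image, mem_filter, mem_univ, true_and, not_exists, not_and]
  rintro k hk rfl
  simp at hk

theorem pivotSet_mul {i : Fin m} {ρ : Equiv.Perm (Fin m)} (hρ : ρ i = i)
    (σ : Equiv.Perm (Fin m)) : pivotSet i (ρ * σ) = (pivotSet i σ).map ρ.toEmbedding := by
  have : (ρ * σ).symm i = σ.symm i := by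
    rw [Equiv.Perm.mul_def, Equiv.symm_trans_apply, ← hρ, Equiv.symm_apply_apply, hρ]
  rw [pivotSet, pivotSet, this, map_eq_image, image_image]
  rfl

theorem image_filter_le_eq_insert (σ : Equiv.Perm (Fin m)) (j : Fin m) :
    (univ.filter (· ≤ j)).image σ = insert (σ j) ((univ.filter (· < j)).image σ) := by
  rw [← image_insert]
  congr 1
  ext k
  simp [le_iff_lt_or_eq, or_comm]

theorem exists_pivotal_iff_pivotSet_mem_boundary (f : Finset (Fin m) → Bool) (i : Fin m)
    (σ : Equiv.Perm (Fin m)) :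
    (∃ j : Fin m, σ j = i ∧
      f ((univ.filter (fun k => k < j)).image (fun k => σ k)) = false ∧
      f ((univ.filter (fun k => k ≤ j)).image (fun k => σ k)) = true)
    ↔ pivotSet i σ ∈ boundary f i := by
  simp only [← Equiv.eq_symm_apply, exists_eq_left, image_filter_le_eq_insert,
    Equiv.apply_symm_apply, boundary, mem_filter, mem_univ, true_and, notMem_pivotSet,
    not_false_eq_true]
  exact and_comm

theorem card_filter_symm_apply_eq_mul (i p : Fin m) :
    #(univ.filter fun σ : Equiv.Perm (Fin m) => σ.symm i = p) * m = m.factorial := by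
  have key := card_filter_mem_mul_card_eq_of_card_fiber_eq univ univ {p}
    (fun σ : Equiv.Perm (Fin m) => σ.symm i) (fun _ _ => mem_univ _) (subset_univ _)
    fun p _ q _ => card_equiv (Equiv.mulRight (Equiv.swap p q)) fun σ => by
      simp [Equiv.Perm.mul_def, Equiv.swap_apply_eq_iff]
  simpa [Fintype.card_perm] using key

theorem card_filter_pivotSet_mem_mul (i p : Fin m) {B : Finset (Finset (Fin m))}
    (hB : B ⊆ (univ.erase i).powersetCard p) :
    #((univ.filter fun σ : Equiv.Perm (Fin m) => σ.symm i = p).filter (pivotSet i · ∈ B))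
        * (m - 1).choose p
      = #(univ.filter fun σ : Equiv.Perm (Fin m) => σ.symm i = p) * #B := by
  have key := card_filter_mem_mul_card_eq_of_card_fiber_eq
    (univ.filter fun σ : Equiv.Perm (Fin m) => σ.symm i = p) _ B (pivotSet i)
    (fun σ hσ => mem_powersetCard_univ_erase.2
      ⟨notMem_pivotSet i σ, by rw [card_pivotSet, (mem_filter.1 hσ).2]⟩) hB
    fun S hS T hT => by
      obtain ⟨hiS, hSp⟩ := mem_powersetCard_univ_erase.1 hS
      obtain ⟨hiT, hTp⟩ := mem_powersetCard_univ_erase.1 hT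
      obtain ⟨ρ, hρi, hρ⟩ := Equiv.Perm.exists_map_finset_eq_of_notMem hiS hiT (hSp.trans hTp.symm)
      refine card_equiv (Equiv.mulLeft ρ) fun σ => ?_
      have : (ρ * σ).symm i = σ.symm i := by
        rw [Equiv.Perm.mul_def, Equiv.symm_trans_apply, ← hρi, Equiv.symm_apply_apply, hρi]
      simp only [mem_filter, mem_univ, true_and, Equiv.coe_mulLeft, this, pivotSet_mul hρi,
        ← hρ, map_inj]
  rwa [card_powersetCard, card_erase_of_mem (mem_univ i), card_univ, Fintype.card_fin] at key

theorem shapley_eq_sum_mu (f : Finset (Fin m) → Bool) (i : Fin m) :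
    shapley f i = (∑ j ∈ range m, mu f i j) / m := by
  rw [shapley, filter_congr fun σ _ => exists_pivotal_iff_pivotSet_mem_boundary f i σ,
    card_eq_sum_card_fiberwise (f := fun σ => σ.symm i) (t := univ) fun _ _ => mem_univ _,
    ← Fin.sum_univ_eq_sum_range (mu f i ·) m, Nat.cast_sum, sum_div, sum_div]
  refine sum_congr rfl fun p _ => ?_
  set B := (boundary f i).filter fun S => #S = p
  have hfilter : (univ.filter (pivotSet i · ∈ boundary f i)).filter (·.symm i = p)
      = (univ.filter (·.symm i = p)).filter (pivotSet i · ∈ B) := by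
    ext σ
    simp only [mem_filter, mem_univ, true_and, B]
    constructor
    · rintro ⟨h, rfl⟩
      exact ⟨rfl, h, card_pivotSet i σ⟩
    · rintro ⟨rfl, h, -⟩
      exact ⟨h, rfl⟩
  have hB : B ⊆ (univ.erase i).powersetCard p := fun S hS => by
    obtain ⟨hS, hSp⟩ := mem_filter.1 hS
    exact mem_powersetCard_univ_erase.2 ⟨(mem_filter.1 hS).2.1, hSp⟩
  have hfib := congrArg (Nat.cast (R := ℚ)) (card_filter_pivotSet_mem_mul i p hB)
  have hperm := congrArg (Nat.cast (R := ℚ)) (card_filter_symm_apply_eq_mul i p)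
  push_cast at hfib hperm
  have hC : (0 : ℚ) < (m - 1).choose p := by exact_mod_cast Nat.choose_pos (by omega)
  have hm : (0 : ℚ) < m := by exact_mod_cast i.pos
  rw [hfilter, mu, div_div, div_eq_div_iff (by positivity) (by positivity), ← hperm]
  linear_combination (m : ℚ) * hfib

end Shapley

theorem filter_apply_symm_mem_eq_map {α β : Type*} [Fintype α] [DecidableEq α] (π : α → β)
    [DecidableEq β] (ρ : Equiv.Perm α) (S : Finset β) :
    univ.filter (fun j => π (ρ.symm j) ∈ S) = (univ.filter (π · ∈ S)).map ρ.toEmbedding := by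
  ext j
  simp [mem_map_equiv]

section Pairing

variable {n : ℕ} (hn : 0 < n)

theorem pairingMaps_nonempty : (pairingMaps n hn).Nonempty := by
  refine ⟨fun j => ⟨(j + 1) / 2, by omega⟩, mem_filter.2 ⟨mem_univ _, Fin.ext (by simp), ?_⟩⟩
  intro i hi
  have : univ.filter (fun j : Fin (2 * n - 1) => (⟨(j + 1) / 2, by omega⟩ : Fin n) = i)
      = {⟨2 * i - 1, by omega⟩, ⟨2 * i, by omega⟩} := by
    ext j
    simp only [mem_filter, mem_univ, true_and, mem_insert, mem_singleton, Fin.ext_iff]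
    omega
  rw [this, card_pair (by simp only [ne_eq, Fin.ext_iff]; omega)]

variable {hn} {π : Fin (2 * n - 1) → Fin n}

theorem apply_eq_zero_iff_of_mem_pairingMaps (hπ : π ∈ pairingMaps n hn) {j : Fin (2 * n - 1)} :
    π j = ⟨0, hn⟩ ↔ j = ⟨0, by omega⟩ := by
  obtain ⟨-, h0, h2⟩ := mem_filter.1 hπ
  have hrest := card_filter_mem_eq_mul univ (univ.erase ⟨0, hn⟩) π 2
    fun b hb => h2 b fun h => (mem_erase.1 hb).1 (Fin.ext h)
  have hsplit := card_filter_add_card_filter_not (s := univ) (p := (π · = ⟨0, hn⟩))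
  simp only [mem_erase, mem_univ, and_true] at hrest
  simp only [card_erase_of_mem (mem_univ _), card_univ, Fintype.card_fin, hrest] at hsplit
  have hfiber : #(univ.filter (π · = ⟨0, hn⟩)) ≤ 1 := by omega
  refine ⟨fun hj => card_le_one.1 hfiber j (by simpa using hj) _ (by simpa using h0),
    fun hj => hj ▸ h0⟩

theorem comp_mem_pairingMaps (hπ : π ∈ pairingMaps n hn) {ρ : Equiv.Perm (Fin (2 * n - 1))}
    (hρ : ρ ⟨0, by omega⟩ = ⟨0, by omega⟩) : π ∘ ρ ∈ pairingMaps n hn := by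
  obtain ⟨-, h0, h2⟩ := mem_filter.1 hπ
  refine mem_filter.2 ⟨mem_univ _, by simp [hρ, h0], fun b hb => ?_⟩
  exact (card_equiv ρ (by simp)).trans (h2 b hb)

theorem filter_apply_mem_mem_powersetCard (hπ : π ∈ pairingMaps n hn) {k : ℕ}
    {S : Finset (Fin n)} (hS : S ∈ (univ.erase ⟨0, hn⟩).powersetCard k) :
    univ.filter (π · ∈ S) ∈ (univ.erase ⟨0, by omega⟩).powersetCard (2 * k) := by
  obtain ⟨-, h0, h2⟩ := mem_filter.1 hπ
  obtain ⟨hS0, hSk⟩ := mem_powersetCard_univ_erase.1 hS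
  refine mem_powersetCard_univ_erase.2 ⟨by simpa [h0] using hS0, ?_⟩
  rw [card_filter_mem_eq_mul univ S π 2 fun b hb => h2 b fun h =>
    hS0 ((show b = ⟨0, hn⟩ from Fin.ext h) ▸ hb), hSk, mul_comm]

theorem mem_boundary_minorFun_iff (f' : Finset (Fin (2 * n - 1)) → Bool)
    (hπ : π ∈ pairingMaps n hn) {k : ℕ} {S : Finset (Fin n)}
    (hS : S ∈ (univ.erase ⟨0, hn⟩).powersetCard k) :
    S ∈ boundary (minorFun f' π) ⟨0, hn⟩
      ↔ univ.filter (π · ∈ S) ∈ (boundary f' ⟨0, by omega⟩).filter (#· = 2 * k) := by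
  have hinsert : univ.filter (π · ∈ insert ⟨0, hn⟩ S)
      = insert ⟨0, by omega⟩ (univ.filter (π · ∈ S)) := by
    ext j
    simp [apply_eq_zero_iff_of_mem_pairingMaps hπ]
  obtain ⟨h0, hcard⟩ := mem_powersetCard_univ_erase.1 (filter_apply_mem_mem_powersetCard hπ hS)
  rw [boundary, boundary, mem_filter, mem_filter, mem_filter]
  simp only [minorFun, hinsert, hcard, h0, (mem_powersetCard_univ_erase.1 hS).1, mem_univ,
    not_false_eq_true, true_and, and_true]

end Pairing

section PairingAverage

variable {n : ℕ} (hn : 0 < n)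

theorem card_filter_pairing_preimage_mem_mul (k : ℕ) {B : Finset (Finset (Fin (2 * n - 1)))}
    (hB : B ⊆ (univ.erase ⟨0, by omega⟩).powersetCard (2 * k)) :
    #((pairingMaps n hn ×ˢ (univ.erase ⟨0, hn⟩).powersetCard k).filter
        fun x => univ.filter (x.1 · ∈ x.2) ∈ B) * (2 * n - 1 - 1).choose (2 * k)
      = #(pairingMaps n hn) * (n - 1).choose k * #B := by
  have key := card_filter_mem_mul_card_eq_of_card_fiber_eq
    (pairingMaps n hn ×ˢ (univ.erase ⟨0, hn⟩).powersetCard k) _ B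
    (fun x => univ.filter (x.1 · ∈ x.2))
    (fun x hx => filter_apply_mem_mem_powersetCard (mem_product.1 hx).1 (mem_product.1 hx).2) hB
    fun T hT T' hT' => by
      obtain ⟨hT0, hTk⟩ := mem_powersetCard_univ_erase.1 hT
      obtain ⟨hT0', hTk'⟩ := mem_powersetCard_univ_erase.1 hT'
      obtain ⟨ρ, hρ0, hρ⟩ :=
        Equiv.Perm.exists_map_finset_eq_of_notMem hT0 hT0' (hTk.trans hTk'.symm)
      have hρ0' : ρ.symm ⟨0, by omega⟩ = ⟨0, by omega⟩ := by rw [Equiv.symm_apply_eq, hρ0]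
      refine card_equiv ((ρ.arrowCongr (Equiv.refl _)).prodCongr (Equiv.refl _)) fun x => ?_
      show _ ↔ (x.1 ∘ ρ.symm, x.2) ∈ _
      have hmem : x.1 ∘ ρ.symm ∈ pairingMaps n hn ↔ x.1 ∈ pairingMaps n hn :=
        ⟨fun h => by simpa [Function.comp_assoc] using comp_mem_pairingMaps h hρ0,
          fun h => comp_mem_pairingMaps h hρ0'⟩
      simp only [mem_filter, mem_product, hmem, Function.comp_apply, filter_apply_symm_mem_eq_map,
        ← hρ, map_inj]
  rwa [card_product, card_powersetCard, card_powersetCard, card_erase_of_mem (mem_univ _),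
    card_erase_of_mem (mem_univ _), card_univ, card_univ, Fintype.card_fin, Fintype.card_fin]
    at key

theorem sum_mu_minorFun (f' : Finset (Fin (2 * n - 1)) → Bool) {k : ℕ} (hk : k < n) :
    ∑ π ∈ pairingMaps n hn, mu (minorFun f' π) ⟨0, hn⟩ k
      = #(pairingMaps n hn) * mu f' ⟨0, by omega⟩ (2 * k) := by
  set B := (boundary f' (⟨0, by omega⟩ : Fin (2 * n - 1))).filter (#· = 2 * k)
  have hslice : ∀ π ∈ pairingMaps n hn, (boundary (minorFun f' π) ⟨0, hn⟩).filter (#· = k)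
      = ((univ.erase ⟨0, hn⟩).powersetCard k).filter fun S => univ.filter (π · ∈ S) ∈ B := by
    intro π hπ
    ext S
    simp only [mem_filter]
    constructor
    · rintro ⟨hSb, hSk⟩
      have hSL : S ∈ (univ.erase ⟨0, hn⟩).powersetCard k :=
        mem_powersetCard_univ_erase.2 ⟨(mem_filter.1 hSb).2.1, hSk⟩
      exact ⟨hSL, (mem_boundary_minorFun_iff f' hπ hSL).1 hSb⟩
    · rintro ⟨hSL, hSB⟩
      exact ⟨(mem_boundary_minorFun_iff f' hπ hSL).2 hSB, (mem_powersetCard_univ_erase.1 hSL).2⟩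
  have hsum : ∑ π ∈ pairingMaps n hn, #((boundary (minorFun f' π) ⟨0, hn⟩).filter (#· = k))
      = #((pairingMaps n hn ×ˢ (univ.erase ⟨0, hn⟩).powersetCard k).filter
          fun x => univ.filter (x.1 · ∈ x.2) ∈ B) := by
    rw [card_filter, sum_product]
    exact sum_congr rfl fun π hπ => by rw [hslice π hπ, card_filter]
  have hB : B ⊆ (univ.erase ⟨0, by omega⟩).powersetCard (2 * k) := fun T hT =>
    mem_powersetCard_univ_erase.2 ⟨(mem_filter.1 (mem_filter.1 hT).1).2.1, (mem_filter.1 hT).2⟩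
  have hcount := congrArg (Nat.cast (R := ℚ)) (card_filter_pairing_preimage_mem_mul hn k hB)
  push_cast at hcount
  have hC₁ : (0 : ℚ) < (n - 1).choose k := by exact_mod_cast Nat.choose_pos (by omega)
  have hC₂ : (0 : ℚ) < (2 * n - 1 - 1).choose (2 * k) := by
    exact_mod_cast Nat.choose_pos (by omega)
  simp only [mu, ← sum_div]
  rw [← Nat.cast_sum, hsum, mul_div_assoc', div_eq_div_iff hC₁.ne' hC₂.ne']
  linear_combination hcount

theorem sum_shapley_minorFun_div_card (f' : Finset (Fin (2 * n - 1)) → Bool) :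
    (∑ π ∈ pairingMaps n hn, shapley (minorFun f' π) ⟨0, hn⟩) / #(pairingMaps n hn)
      = (∑ k ∈ range n, mu f' ⟨0, by omega⟩ (2 * k)) / n := by
  have hP : (0 : ℚ) < #(pairingMaps n hn) := by exact_mod_cast (pairingMaps_nonempty hn).card_pos
  simp only [shapley_eq_sum_mu, ← sum_div]
  rw [sum_comm, sum_congr rfl fun k hk => sum_mu_minorFun hn f' (mem_range.1 hk), ← mul_sum]
  field_simp

end PairingAverage

/-- If `Φ_{f'}(1) ≥ λ ≥ 1/n`, then the expected Shapley value of coordinate 1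
of a uniformly random pairing minor of `f'` is at least some `γ(λ) > 0`. -/
theorem expected_shapley_random_pairing (lam : ℚ) : ∃ γ : ℚ, 0 < γ ∧
    ∀ (n : ℕ) (hn : 0 < n) (f' : Finset (Fin (2*n-1)) → Bool),
      MonotoneB f' → lam ≤ shapley f' ⟨0, by omega⟩ → 1 / (n : ℚ) ≤ lam →
      γ ≤ (∑ π ∈ pairingMaps n hn, shapley (minorFun f' π) ⟨0, hn⟩) /
            (((pairingMaps n hn).card : ℕ) : ℚ) := by
  rcases le_or_gt lam 0 with hlam | hlam
  · refine ⟨1, one_pos, fun n hn _ _ _ hn_lam => absurd (hn_lam.trans hlam) ?_⟩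
    have : (0 : ℚ) < n := by exact_mod_cast hn
    exact not_le.2 (by positivity)
  refine ⟨lam / 4, by positivity, fun n hn f' hf hshap hn_lam => ?_⟩
  rw [sum_shapley_minorFun_div_card hn f']
  rw [shapley_eq_sum_mu] at hshap
  rcases (Nat.one_le_iff_ne_zero.2 hn.ne').eq_or_lt with rfl | hn₂
  · simp only [Nat.cast_one, div_one, Nat.reduceMul, Nat.reduceSub, sum_range_one] at hshap ⊢
    linarith
  have hsplit := sum_mu_le_two_mul_sum_mu_even hf ⟨0, by omega⟩ (n := n) (by omega)
  have hm : ((2 * n - 1 : ℕ) : ℚ) = 2 * n - 1 := by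
    rw [Nat.cast_sub (by omega)]; push_cast; ring
  have hn₂' : (2 : ℚ) ≤ n := by exact_mod_cast hn₂
  rw [hm, le_div_iff₀ (by linarith)] at hshap
  rw [div_le_iff₀ (by linarith)] at hn_lam
  rw [le_div_iff₀ (by linarith)]
  nlinarith
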